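/- arXiv:1210.4489 — 5 statements merged into one kernel-verified Lean document; each statement's English description precedes it below -/
import Mathlib

section
/- Let p > 3 be a prime and λ ∈ ℤ_p a p-adic unit. Define a_n = Σ_{i=0}^n C(2i,i)³ (λ/64)^i and b_n = Σ_{i=0}^n C(2i,i)³ (λ/64)^i ( 6(H_{2i} − H_i) + ((λ/64)^{p−1} − 1)/p ), both elements of ℚ_p. Then for every integer k with (p−1)/2 ≤ k < p and every natural number n, a_{k+pn} ≡ a_k·a_n + p·b_k·Σ_{i=0}^n i·C(2i,i)³ (λ/64)^i (mod p² ℤ_p). -/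
open Finset

/-- The harmonic sum `H_k = ∑_{j=1}^k 1/j`. -/
def harmonicSum (k : ℕ) : ℚ := ∑ j ∈ Icc 1 k, (1 : ℚ) / j

/-!
Write `m = p i + j` with `0 ≤ j < p`, `t = λ/64` and `q = (t^{p-1} - 1)/p`. Modulo `p²` the
summand `C(2m, m)³ tᵐ` is the product of the summands at `i` and at `j` times
`1 + p i (6 (H_{2j} - H_j) + q)`:
* `C(2pi, pi) ≡ C(2i, i)`, because each block `∏_{0 < s < p} (pm + s)` of `(2pi)!` and
  `(pi)!` is `(p - 1)! (1 + pm H_{p-1}) ≡ (p - 1)!`, as `H_{p-1} ≡ 0 mod p`;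
* for `2j < p`, `C(2(pi + j), pi + j) ≡ C(2pi, pi) C(2j, j) (1 + 2pi (H_{2j} - H_j))`, by
  expanding `(pi + j)! / (pi)!` and `(2pi + 2j)! / (2pi)!` to first order in `p`;
* `t^{pi} = tⁱ (1 + pq)ⁱ ≡ tⁱ (1 + piq)`.
For `2j ≥ p`, which covers `k < j < p` since `k ≥ (p - 1)/2`, Lucas' theorem gives
`p ∣ C(2(pi + j), pi + j)` and `p ∣ C(2j, j)`, so both sides vanish mod `p²`. Summing over
`i ≤ n`, `j ≤ k` gives `a_k a_n + p b_k ∑ i C(2i, i)³ tⁱ`.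

The congruences between `p`-adic integers are proved as identities in `ZMod (p ^ 2)`.
-/

open scoped Nat

namespace Nat

theorem choose_two_mul_add_mul_ascFactorial_sq (m j : ℕ) :
    (2 * (m + j)).choose (m + j) * (m + 1).ascFactorial j ^ 2
      = (2 * m).choose m * (2 * m + 1).ascFactorial (2 * j) := by
  refine Nat.eq_of_mul_eq_mul_left (by positivity : 0 < m ! ^ 2) ?_
  have hN := add_choose_mul_factorial_mul_factorial (m + j) (m + j)
  have hm := add_choose_mul_factorial_mul_factorial m m
  rw [← two_mul] at hN hm
  calc m ! ^ 2 * ((2 * (m + j)).choose (m + j) * (m + 1).ascFactorial j ^ 2)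
      = (2 * (m + j)).choose (m + j) * (m ! * (m + 1).ascFactorial j)
          * (m ! * (m + 1).ascFactorial j) := by ring
    _ = (2 * m)! * (2 * m + 1).ascFactorial (2 * j) := by
      rw [factorial_mul_ascFactorial, hN, factorial_mul_ascFactorial, mul_add]
    _ = _ := by rw [← hm]; ring

theorem factorial_mul_eq_pow_mul_factorial_mul_prod {p : ℕ} (hp : 0 < p) (n : ℕ) :
    (p * n)! = p ^ n * n ! * ∏ m ∈ range n, (p * m + 1).ascFactorial (p - 1) := by
  induction n with
  | zero => simp
  | succ n ih =>
    have hblock : (p * n + 1).ascFactorial p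
        = p * (n + 1) * (p * n + 1).ascFactorial (p - 1) := by
      obtain ⟨p, rfl⟩ := Nat.exists_eq_add_one_of_ne_zero hp.ne'
      rw [add_tsub_cancel_right, ascFactorial_succ]
      ring
    rw [mul_add_one, ← factorial_mul_ascFactorial, hblock, ih, prod_range_succ, factorial_succ]
    ring

theorem choose_two_mul_mul_mul_prod_sq {p : ℕ} (hp : 0 < p) (n : ℕ) :
    (2 * (p * n)).choose (p * n) * (∏ m ∈ range n, (p * m + 1).ascFactorial (p - 1)) ^ 2
      = (2 * n).choose n * ∏ m ∈ range (2 * n), (p * m + 1).ascFactorial (p - 1) := by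
  refine Nat.eq_of_mul_eq_mul_left (by positivity : 0 < (p ^ n * n !) ^ 2) ?_
  have hpn := add_choose_mul_factorial_mul_factorial (p * n) (p * n)
  have hn := add_choose_mul_factorial_mul_factorial n n
  rw [← two_mul] at hpn hn
  calc (p ^ n * n !) ^ 2 * ((2 * (p * n)).choose (p * n)
        * (∏ m ∈ range n, (p * m + 1).ascFactorial (p - 1)) ^ 2)
      = (2 * (p * n)).choose (p * n) * (p * n)! * (p * n)! := by
        rw [factorial_mul_eq_pow_mul_factorial_mul_prod hp]; ring
    _ = p ^ (2 * n) * (2 * n)! * ∏ m ∈ range (2 * n), (p * m + 1).ascFactorial (p - 1) := by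
        rw [hpn, mul_left_comm, factorial_mul_eq_pow_mul_factorial_mul_prod hp]
    _ = _ := by rw [← hn]; ring

theorem Prime.dvd_choose_two_mul_add {p : ℕ} (hp : p.Prime) (i : ℕ) {j : ℕ} (hj : j < p)
    (h : p ≤ 2 * j) : p ∣ (2 * (p * i + j)).choose (p * i + j) := by
  have := Fact.mk hp
  obtain ⟨d, hd⟩ := Nat.exists_eq_add_of_le h
  have hn : (2 * (p * i + j)) % p = d := by
    rw [show 2 * (p * i + j) = d + p * (2 * i + 1) by rw [mul_add, hd]; ring,
      add_mul_mod_self_left, mod_eq_of_lt (by omega)]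
  have hk : (p * i + j) % p = j := by
    rw [add_comm, add_mul_mod_self_left, mod_eq_of_lt hj]
  have hlucas := Choose.choose_modEq_choose_mod_mul_choose_div_nat (p := p)
    (n := 2 * (p * i + j)) (k := p * i + j)
  rw [hn, hk, choose_eq_zero_of_lt (show d < j by omega), zero_mul] at hlucas
  exact modEq_zero_iff_dvd.mp hlucas

end Nat

section SquareZero

variable {R : Type*} [CommRing R]

theorem one_add_pow_of_sq_eq_zero {ε : R} (hε : ε ^ 2 = 0) (n : ℕ) :
    (1 + ε) ^ n = 1 + n * ε := by
  induction n with
  | zero => simp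
  | succ n ih => rw [pow_succ, ih]; push_cast; linear_combination n * hε

theorem pow_mul_eq_of_pow_sub_one_eq {p : ℕ} (hp : 0 < p) (hsq : (p : R) ^ 2 = 0) {T Q : R}
    (hTQ : T ^ (p - 1) = 1 + p * Q) (i : ℕ) : T ^ (p * i) = T ^ i * (1 + p * i * Q) := by
  have hTp : T ^ p = T * (1 + p * Q) := by
    rw [← hTQ, ← pow_succ', Nat.sub_add_cancel hp]
  rw [pow_mul, hTp, mul_pow, one_add_pow_of_sq_eq_zero (by rw [mul_pow, hsq, zero_mul])]
  ring

end SquareZero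

def binomCubeTerm {R : Type*} [Semiring R] (T : R) (m : ℕ) : R :=
  ((2 * m).choose m : R) ^ 3 * T ^ m

theorem map_binomCubeTerm {R S : Type*} [Semiring R] [Semiring S] (f : R →+* S) (T : R)
    (m : ℕ) :
    f (binomCubeTerm T m) = binomCubeTerm (f T) m := by
  simp [binomCubeTerm]

def harmonicZMod (n r : ℕ) : ZMod n := ∑ s ∈ Icc 1 r, (s : ZMod n)⁻¹

theorem harmonicZMod_succ (n r : ℕ) :
    harmonicZMod n (r + 1) = harmonicZMod n r + ((r + 1 : ℕ) : ZMod n)⁻¹ :=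
  sum_Icc_succ_top (Nat.le_add_left 1 r) _

namespace ZMod

theorem natCast_self_sq (p : ℕ) : (p : ZMod (p ^ 2)) ^ 2 = 0 := by
  exact_mod_cast natCast_self (p ^ 2)

variable {p : ℕ} [Fact p.Prime]

theorem natCast_mul_inv_of_not_dvd {s : ℕ} (h : ¬ p ∣ s) :
    (s : ZMod (p ^ 2)) * (s : ZMod (p ^ 2))⁻¹ = 1 :=
  mul_inv_of_unit _ ((isUnit_natCast_iff_not_dvd_pow Fact.out two_pos).mpr h)

theorem prod_add_eq_factorial_mul {c : ZMod (p ^ 2)} (hc : c ^ 2 = 0) {r : ℕ} (hr : r < p) :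
    ∏ i ∈ range r, (c + 1 + (i : ZMod (p ^ 2)))
      = (r ! : ZMod (p ^ 2)) * (1 + c * harmonicZMod (p ^ 2) r) := by
  induction r with
  | zero => simp [harmonicZMod]
  | succ r ih =>
    have hu := natCast_mul_inv_of_not_dvd (p := p) (s := r + 1)
      (Nat.not_dvd_of_pos_of_lt r.succ_pos hr)
    rw [prod_range_succ, ih (by omega), harmonicZMod_succ, Nat.factorial_succ]
    push_cast at hu ⊢
    linear_combination (-((r ! : ZMod (p ^ 2)) * c)) * hu
      + ((r ! : ZMod (p ^ 2)) * harmonicZMod (p ^ 2) r) * hc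

theorem natCast_mul_harmonicZMod_pred (hp2 : p ≠ 2) :
    (p : ZMod (p ^ 2)) * harmonicZMod (p ^ 2) (p - 1) = 0 := by
  have hp := (Fact.out : p.Prime)
  -- `p (1/s + 1/(p - s)) = p² / (s (p - s))`
  have hpair : ∀ s ∈ Icc 1 (p - 1),
      (p : ZMod (p ^ 2)) * ((s : ZMod (p ^ 2))⁻¹ + ((p - s : ℕ) : ZMod (p ^ 2))⁻¹) = 0 := by
    intro s hs
    rw [mem_Icc] at hs
    have h₁ := natCast_mul_inv_of_not_dvd (p := p)
      (Nat.not_dvd_of_pos_of_lt (by omega : 0 < s) (by omega : s < p))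
    have h₂ := natCast_mul_inv_of_not_dvd (p := p)
      (Nat.not_dvd_of_pos_of_lt (by omega : 0 < p - s) (by omega : p - s < p))
    rw [Nat.cast_sub (by omega)] at h₂ ⊢
    linear_combination (-(p : ZMod (p ^ 2)) * (s : ZMod (p ^ 2))⁻¹) * h₂
      + ((s : ZMod (p ^ 2))⁻¹ * ((p : ZMod (p ^ 2)) - s)⁻¹) * natCast_self_sq p
      - ((p : ZMod (p ^ 2)) * ((p : ZMod (p ^ 2)) - s)⁻¹) * h₁
  have hreflect : ∑ s ∈ Icc 1 (p - 1), ((p - s : ℕ) : ZMod (p ^ 2))⁻¹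
      = harmonicZMod (p ^ 2) (p - 1) :=
    sum_nbij' (p - ·) (p - ·) (by intro s hs; simp at hs ⊢; omega)
      (by intro s hs; simp at hs ⊢; omega) (by intro s hs; simp at hs; omega)
      (by intro s hs; simp at hs; omega) (fun _ _ => rfl)
  have h2 := natCast_mul_inv_of_not_dvd (p := p) (s := 2)
    (Nat.not_dvd_of_pos_of_lt two_pos (lt_of_le_of_ne hp.two_le (Ne.symm hp2)))
  have hsum := sum_eq_zero hpair
  rw [← mul_sum, sum_add_distrib, hreflect] at hsum
  change (p : ZMod (p ^ 2)) * (harmonicZMod _ (p - 1) + _) = 0 at hsum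
  push_cast at h2
  linear_combination (2 : ZMod (p ^ 2))⁻¹ * hsum
    - ((p : ZMod (p ^ 2)) * harmonicZMod (p ^ 2) (p - 1)) * h2

theorem natCast_ascFactorial_prime_mul_add_one (hp2 : p ≠ 2) (m : ℕ) :
    ((p * m + 1).ascFactorial (p - 1) : ZMod (p ^ 2)) = (p - 1)! := by
  have hc : ((p : ZMod (p ^ 2)) * m) ^ 2 = 0 := by rw [mul_pow, natCast_self_sq, zero_mul]
  rw [Nat.ascFactorial_eq_prod_range]
  push_cast
  rw [prod_add_eq_factorial_mul hc (Nat.sub_lt (Fact.out : p.Prime).pos one_pos)]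
  linear_combination ((p - 1)! * m : ZMod (p ^ 2)) * natCast_mul_harmonicZMod_pred hp2

theorem natCast_choose_two_mul_prime_mul (hp2 : p ≠ 2) (n : ℕ) :
    ((2 * (p * n)).choose (p * n) : ZMod (p ^ 2)) = (2 * n).choose n := by
  have hp := (Fact.out : p.Prime)
  have hF : IsUnit ((p - 1)! : ZMod (p ^ 2)) :=
    (isUnit_natCast_iff_not_dvd_pow hp two_pos).mpr
      (by have := hp.pos; rw [hp.dvd_factorial]; omega)
  have h := congrArg (Nat.cast : ℕ → ZMod (p ^ 2)) (Nat.choose_two_mul_mul_mul_prod_sq hp.pos n)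
  simp only [Nat.cast_mul, Nat.cast_pow, Nat.cast_prod, natCast_ascFactorial_prime_mul_add_one hp2,
    prod_const, card_range, ← pow_mul, mul_comm n 2] at h
  exact (hF.pow _).mul_right_cancel h

theorem natCast_choose_two_mul_prime_mul_add (hp2 : p ≠ 2) (i : ℕ) {j : ℕ} (hj : 2 * j < p) :
    ((2 * (p * i + j)).choose (p * i + j) : ZMod (p ^ 2))
      = ((2 * i).choose i : ZMod (p ^ 2)) * ((2 * j).choose j : ZMod (p ^ 2))
        * (1 + 2 * (p : ZMod (p ^ 2)) * (i : ZMod (p ^ 2))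
          * (harmonicZMod (p ^ 2) (2 * j) - harmonicZMod (p ^ 2) j)) := by
  have hε : ((p : ZMod (p ^ 2)) * i) ^ 2 = 0 := by rw [mul_pow, natCast_self_sq, zero_mul]
  have h2ε : (2 * (p : ZMod (p ^ 2)) * i) ^ 2 = 0 := by rw [mul_assoc, mul_pow, hε, mul_zero]
  have hj! : IsUnit (j ! : ZMod (p ^ 2)) :=
    (isUnit_natCast_iff_not_dvd_pow Fact.out two_pos).mpr
      (by rw [(Fact.out : p.Prime).dvd_factorial]; omega)
  have hid := congrArg (Nat.cast : ℕ → ZMod (p ^ 2))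
    (Nat.choose_two_mul_add_mul_ascFactorial_sq (p * i) j)
  have hcj := congrArg (Nat.cast : ℕ → ZMod (p ^ 2))
    (Nat.add_choose_mul_factorial_mul_factorial j j)
  rw [← two_mul] at hcj
  simp only [Nat.cast_mul, Nat.cast_pow, Nat.ascFactorial_eq_prod_range, Nat.cast_prod,
    Nat.cast_add, Nat.cast_one, Nat.cast_ofNat, natCast_choose_two_mul_prime_mul hp2] at hid hcj
  rw [prod_add_eq_factorial_mul hε (by omega), ← mul_assoc,
    prod_add_eq_factorial_mul h2ε hj] at hid
  set A := ((2 * (p * i + j)).choose (p * i + j) : ZMod (p ^ 2))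
  set B := ((2 * i).choose i : ZMod (p ^ 2))
  set C := ((2 * j).choose j : ZMod (p ^ 2))
  set ε := (p : ZMod (p ^ 2)) * i
  set h₁ := harmonicZMod (p ^ 2) j
  set h₂ := harmonicZMod (p ^ 2) (2 * j)
  -- `hid : A (j! (1 + ε h₁))² = B ((2j)! (1 + 2ε h₂))` and `hcj : C j! j! = (2j)!`
  have hscaled : A * (1 + 2 * ε * h₁) * (j ! : ZMod (p ^ 2)) ^ 2
      = B * C * (1 + 2 * ε * h₂) * (j ! : ZMod (p ^ 2)) ^ 2 := by
    linear_combination hid - (A * (j ! : ZMod (p ^ 2)) ^ 2 * h₁ ^ 2) * hε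
      - (B * (1 + 2 * ε * h₂)) * hcj
  have hunit := (hj!.pow 2).mul_right_cancel hscaled
  linear_combination (1 - 2 * ε * h₁) * hunit
    + (4 * A * h₁ ^ 2 - 4 * B * C * h₁ * h₂) * hε

theorem binomCubeTerm_prime_mul_add (hp2 : p ≠ 2) {T Q : ZMod (p ^ 2)}
    (hTQ : T ^ (p - 1) = 1 + (p : ZMod (p ^ 2)) * Q) (i : ℕ) {j : ℕ} (hj : 2 * j < p) :
    binomCubeTerm T (p * i + j)
      = binomCubeTerm T j * binomCubeTerm T i
        + (p : ZMod (p ^ 2)) * (binomCubeTerm T j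
            * (6 * (harmonicZMod (p ^ 2) (2 * j) - harmonicZMod (p ^ 2) j) + Q))
          * ((i : ZMod (p ^ 2)) * binomCubeTerm T i) := by
  have hε : ((p : ZMod (p ^ 2)) * i) ^ 2 = 0 := by rw [mul_pow, natCast_self_sq, zero_mul]
  unfold binomCubeTerm
  rw [natCast_choose_two_mul_prime_mul_add hp2 i hj, mul_pow, one_add_pow_of_sq_eq_zero, pow_add,
    pow_mul_eq_of_pow_sub_one_eq (Fact.out : p.Prime).pos (natCast_self_sq p) hTQ]
  · linear_combination (6 * ((2 * i).choose i : ZMod (p ^ 2)) ^ 3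
      * ((2 * j).choose j : ZMod (p ^ 2)) ^ 3 * T ^ i * T ^ j
      * (harmonicZMod (p ^ 2) (2 * j) - harmonicZMod (p ^ 2) j) * Q) * hε
  · linear_combination (4 * (harmonicZMod (p ^ 2) (2 * j) - harmonicZMod (p ^ 2) j) ^ 2) * hε

end ZMod

namespace Padic

variable {p : ℕ} [Fact p.Prime]

def ModEqPSq (x y : ℚ_[p]) : Prop := ‖x - y‖ ≤ (p : ℝ) ^ (-2 : ℤ)

notation:50 x " ≡ " y " [p²]" => ModEqPSq x y

namespace ModEqPSq

theorem refl (x : ℚ_[p]) : x ≡ x [p²] := by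
  rw [ModEqPSq, sub_self, norm_zero]; positivity

theorem of_eq {x y : ℚ_[p]} (h : x = y) : x ≡ y [p²] := h ▸ refl x

theorem trans {x y z : ℚ_[p]} (h₁ : x ≡ y [p²]) (h₂ : y ≡ z [p²]) : x ≡ z [p²] := by
  rw [ModEqPSq, ← sub_add_sub_cancel]
  exact (IsUltrametricDist.norm_add_le_max _ _).trans (max_le h₁ h₂)

theorem add {x y x' y' : ℚ_[p]} (h : x ≡ y [p²]) (h' : x' ≡ y' [p²]) :
    x + x' ≡ y + y' [p²] := by
  rw [ModEqPSq, add_sub_add_comm]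
  exact (IsUltrametricDist.norm_add_le_max _ _).trans (max_le h h')

theorem sum {ι : Type*} (s : Finset ι) {f g : ι → ℚ_[p]}
    (h : ∀ i ∈ s, f i ≡ g i [p²]) :
    ∑ i ∈ s, f i ≡ ∑ i ∈ s, g i [p²] := by
  rw [ModEqPSq, ← sum_sub_distrib]
  exact IsUltrametricDist.norm_sum_le_of_forall_le_of_nonneg (by positivity) h

theorem of_norm_le {x y : ℚ_[p]} (hx : ‖x‖ ≤ (p : ℝ) ^ (-2 : ℤ))
    (hy : ‖y‖ ≤ (p : ℝ) ^ (-2 : ℤ)) : x ≡ y [p²] := by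
  rw [ModEqPSq, sub_eq_add_neg]
  exact (IsUltrametricDist.norm_add_le_max _ _).trans (max_le hx (by rwa [norm_neg]))

end ModEqPSq

theorem norm_natCast_le_inv_of_dvd {n : ℕ} (h : p ∣ n) :
    ‖(n : ℚ_[p])‖ ≤ (p : ℝ)⁻¹ := by
  obtain ⟨c, rfl⟩ := h
  rw [Nat.cast_mul, norm_mul, norm_p]
  exact mul_le_of_le_one_right (by positivity) (IsUltrametricDist.norm_natCast_le_one _ c)

theorem ratCast_harmonicSum (r : ℕ) :
    (harmonicSum r : ℚ_[p]) = ∑ s ∈ Icc 1 r, (s : ℚ_[p])⁻¹ := by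
  simp [harmonicSum]

theorem norm_harmonicSum_le {r : ℕ} (hr : r < p ^ 2) : ‖(harmonicSum r : ℚ_[p])‖ ≤ p := by
  rw [ratCast_harmonicSum]
  refine IsUltrametricDist.norm_sum_le_of_forall_le_of_nonneg (by positivity) fun s hs => ?_
  rw [mem_Icc] at hs
  have hndvd : ¬ (p ^ 2 : ℤ) ∣ s := by
    exact_mod_cast Nat.not_dvd_of_pos_of_lt (by omega) (by omega)
  have hlow : (p : ℝ)⁻¹ ≤ ‖(s : ℚ_[p])‖ := by
    have h := mt (norm_int_le_pow_iff_dvd (p := p) s 2).mp hndvd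
    rw [norm_le_pow_iff_norm_lt_pow_add_one, not_lt] at h
    simpa using h
  rw [norm_inv]
  exact inv_le_of_inv_le₀ (by exact_mod_cast (Fact.out : p.Prime).pos) hlow

theorem norm_binomCubeTerm_le_one {t : ℚ_[p]} (ht : ‖t‖ ≤ 1) (m : ℕ) :
    ‖binomCubeTerm t m‖ ≤ 1 := by
  rw [binomCubeTerm, norm_mul, norm_pow, norm_pow]
  exact mul_le_one₀ (pow_le_one₀ (norm_nonneg _) (IsUltrametricDist.norm_natCast_le_one _ _))
    (by positivity) (pow_le_one₀ (norm_nonneg _) ht)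

theorem norm_binomCubeTerm_le {t : ℚ_[p]} (ht : ‖t‖ ≤ 1) {m : ℕ}
    (h : p ∣ (2 * m).choose m) :
    ‖binomCubeTerm t m‖ ≤ (p : ℝ) ^ (-2 : ℤ) := by
  have hp1 : (p : ℝ)⁻¹ ≤ 1 := inv_le_one_of_one_le₀ (mod_cast (Fact.out : p.Prime).one_le)
  rw [binomCubeTerm, norm_mul, norm_pow, norm_pow,
    show (p : ℝ) ^ (-2 : ℤ) = ((p : ℝ)⁻¹) ^ 2 by simp [zpow_neg, inv_pow]]
  calc ‖((2 * m).choose m : ℚ_[p])‖ ^ 3 * ‖t‖ ^ m ≤ ((p : ℝ)⁻¹) ^ 3 * 1 :=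
        mul_le_mul (pow_le_pow_left₀ (norm_nonneg _) (norm_natCast_le_inv_of_dvd h) 3)
          (pow_le_one₀ (norm_nonneg _) ht) (by positivity) (by positivity)
    _ ≤ ((p : ℝ)⁻¹) ^ 2 := by
        rw [mul_one]; exact pow_le_pow_of_le_one (by positivity) hp1 (by norm_num)

theorem norm_natCast_mul_harmonicSum_add_le_one {j : ℕ} (hj : j < p) {q : ℚ_[p]}
    (hq : ‖q‖ ≤ 1) :
    ‖(p : ℚ_[p]) * (6 * ((harmonicSum (2 * j) : ℚ_[p]) - (harmonicSum j : ℚ_[p])) + q)‖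
      ≤ 1 := by
  have hp := (Fact.out : p.Prime)
  have hsq : 2 * j < p ^ 2 := by nlinarith [hp.two_le]
  have h6 : ‖(6 : ℚ_[p])‖ ≤ 1 := mod_cast IsUltrametricDist.norm_natCast_le_one ℚ_[p] 6
  rw [norm_mul, norm_p, inv_mul_le_iff₀ (by exact_mod_cast hp.pos), mul_one, sub_eq_add_neg]
  refine (IsUltrametricDist.norm_add_le_max _ _).trans (max_le ?_ (hq.trans (mod_cast hp.one_le)))
  rw [norm_mul]
  refine (mul_le_of_le_one_left (norm_nonneg _) h6).trans
    ((IsUltrametricDist.norm_add_le_max _ _).trans (max_le (norm_harmonicSum_le hsq) ?_))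
  rw [norm_neg]
  exact norm_harmonicSum_le (by omega)

theorem norm_binomCubeTerm_mul_add_le {t x : ℚ_[p]} (ht : ‖t‖ ≤ 1)
    (hx : ‖(p : ℚ_[p]) * x‖ ≤ 1) (i : ℕ) {j : ℕ} (hj : p ∣ (2 * j).choose j) :
    ‖binomCubeTerm t j * binomCubeTerm t i
      + (p : ℚ_[p]) * (binomCubeTerm t j * x) * ((i : ℚ_[p]) * binomCubeTerm t i)‖
      ≤ (p : ℝ) ^ (-2 : ℤ) := by
  have hi : ‖(i : ℚ_[p]) * binomCubeTerm t i‖ ≤ 1 := by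
    rw [norm_mul]
    exact mul_le_one₀ (IsUltrametricDist.norm_natCast_le_one _ i) (norm_nonneg _)
      (norm_binomCubeTerm_le_one ht i)
  refine (IsUltrametricDist.norm_add_le_max _ _).trans (max_le ?_ ?_)
  · rw [norm_mul]
    exact (mul_le_of_le_one_right (norm_nonneg _) (norm_binomCubeTerm_le_one ht i)).trans
      (norm_binomCubeTerm_le ht hj)
  · rw [show (p : ℚ_[p]) * (binomCubeTerm t j * x) * ((i : ℚ_[p]) * binomCubeTerm t i)
        = binomCubeTerm t j * ((p * x) * (i * binomCubeTerm t i)) by ring, norm_mul, norm_mul]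
    exact (mul_le_of_le_one_right (norm_nonneg _) (mul_le_one₀ hx (norm_nonneg _) hi)).trans
      (norm_binomCubeTerm_le ht hj)

theorem sum_range_modEqPSq_sum_sum {f : ℕ → ℚ_[p]} {k : ℕ} (hk : k < p)
    (hf : ∀ i j, k < j → j < p → ‖f (p * i + j)‖ ≤ (p : ℝ) ^ (-2 : ℤ)) (n : ℕ) :
    ∑ m ∈ range (k + p * n + 1), f m
      ≡ ∑ i ∈ range (n + 1), ∑ j ∈ range (k + 1), f (p * i + j) [p²] := by
  induction n with
  | zero => simpa using ModEqPSq.refl _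
  | succ n ih =>
    have hsplit : ∑ m ∈ range (k + p * (n + 1) + 1), f m
        = ∑ m ∈ range (k + p * n + 1), f m
          + (∑ x ∈ range (p - 1 - k), f (p * n + (k + 1 + x))
            + ∑ j ∈ range (k + 1), f (p * (n + 1) + j)) := by
      rw [show k + p * (n + 1) + 1 = (k + p * n + 1) + ((p - 1 - k) + (k + 1)) by
          rw [mul_add_one]; omega,
        sum_range_add, sum_range_add (fun x => f (k + p * n + 1 + x))]
      congr 2 <;> refine sum_congr rfl fun x _ => congrArg f ?_
      · omega
      · rw [mul_add_one]; omega
    have htail : ∑ x ∈ range (p - 1 - k), f (p * n + (k + 1 + x)) ≡ 0 [p²] := by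
      rw [ModEqPSq, sub_zero]
      refine IsUltrametricDist.norm_sum_le_of_forall_le_of_nonneg (by positivity) fun x hx => ?_
      rw [mem_range] at hx
      exact hf n _ (by omega) (by omega)
    rw [hsplit, sum_range_succ _ (n + 1)]
    simpa using ih.add (htail.add (ModEqPSq.refl _))

end Padic

namespace PadicInt

variable {p : ℕ} [Fact p.Prime]

theorem coe_binomCubeTerm (T : ℤ_[p]) (m : ℕ) :
    ((binomCubeTerm T m : ℤ_[p]) : ℚ_[p]) = binomCubeTerm (T : ℚ_[p]) m :=
  map_binomCubeTerm Coe.ringHom T m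

theorem coe_modEqPSq_coe_of_toZModPow_eq {x y : ℤ_[p]} (h : toZModPow 2 x = toZModPow 2 y) :
    (x : ℚ_[p]) ≡ y [p²] := by
  have hker : x - y ∈ RingHom.ker (toZModPow 2) := by
    rw [RingHom.mem_ker, map_sub, h, sub_self]
  rw [ker_toZModPow, ← norm_le_pow_iff_mem_span_pow] at hker
  rw [Padic.ModEqPSq, ← coe_sub, padic_norm_e_of_padicInt]
  exact_mod_cast hker

theorem exists_coe_eq_harmonicSum {r : ℕ} (hr : r < p) :
    ∃ h : ℤ_[p], (h : ℚ_[p]) = harmonicSum r ∧ toZModPow 2 h = harmonicZMod (p ^ 2) r := by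
  have hinv : ∀ s ∈ Icc 1 r, (s : ℤ_[p]) * (s : ℤ_[p]).inv = 1 := fun s hs => by
    rw [mem_Icc] at hs
    exact mul_inv (norm_natCast_eq_one_iff.mpr
      (Nat.coprime_of_lt_prime (by omega) (by omega) Fact.out))
  refine ⟨∑ s ∈ Icc 1 r, (s : ℤ_[p]).inv, ?_, ?_⟩
  · rw [Padic.ratCast_harmonicSum, coe_sum]
    refine sum_congr rfl fun s hs => eq_inv_of_mul_eq_one_right ?_
    exact_mod_cast congrArg ((↑) : ℤ_[p] → ℚ_[p]) (hinv s hs)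
  · rw [map_sum, harmonicZMod]
    refine sum_congr rfl fun s hs => (ZMod.inv_eq_of_mul_eq_one _ _ _ ?_).symm
    simpa using congrArg (toZModPow 2) (hinv s hs)

theorem exists_fermatQuotient {t : ℚ_[p]} (ht : ‖t‖ = 1) :
    ∃ T Q : ℤ_[p], (T : ℚ_[p]) = t ∧ T ^ (p - 1) = 1 + p * Q
      ∧ (t ^ (p - 1) - 1) / p = Q := by
  set T : ℤ_[p] := ⟨t, ht.le⟩
  have hker : ∀ x : ℤ_[p], toZMod x = 0 ↔ (p : ℤ_[p]) ∣ x := fun x => by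
    rw [← RingHom.mem_ker, ker_toZMod, IsLocalRing.mem_maximalIdeal, mem_nonunits,
      norm_lt_one_iff_dvd]
  have hT0 : toZMod T ≠ 0 := by
    rw [Ne, hker, ← norm_lt_one_iff_dvd, show ‖T‖ = 1 from ht]; exact lt_irrefl 1
  obtain ⟨Q, hQ⟩ := (hker (T ^ (p - 1) - 1)).mp (by
    rw [map_sub, map_pow, map_one, ZMod.pow_card_sub_one_eq_one hT0, sub_self])
  refine ⟨T, Q, rfl, by rw [← hQ]; ring, ?_⟩
  rw [div_eq_iff (by exact_mod_cast (Fact.out : p.Prime).ne_zero)]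
  exact_mod_cast congrArg ((↑) : ℤ_[p] → ℚ_[p]) (hQ.trans (mul_comm _ _))

end PadicInt

open Padic in
theorem binomCubeTerm_prime_mul_add_modEqPSq {p : ℕ} [Fact p.Prime] (hp2 : p ≠ 2)
    {T Q : ℤ_[p]} (hTQ : T ^ (p - 1) = 1 + p * Q) (i : ℕ) {j : ℕ} (hj : j < p) :
    binomCubeTerm (T : ℚ_[p]) (p * i + j)
      ≡ binomCubeTerm (T : ℚ_[p]) j * binomCubeTerm (T : ℚ_[p]) i
        + (p : ℚ_[p]) * (binomCubeTerm (T : ℚ_[p]) j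
            * (6 * ((harmonicSum (2 * j) : ℚ_[p]) - (harmonicSum j : ℚ_[p])) + (Q : ℚ_[p])))
          * ((i : ℚ_[p]) * binomCubeTerm (T : ℚ_[p]) i) [p²] := by
  have hp := (Fact.out : p.Prime)
  rcases lt_or_ge (2 * j) p with h | h
  · obtain ⟨h₁, hc₁, hz₁⟩ := PadicInt.exists_coe_eq_harmonicSum hj
    obtain ⟨h₂, hc₂, hz₂⟩ := PadicInt.exists_coe_eq_harmonicSum h
    have hcongr := PadicInt.coe_modEqPSq_coe_of_toZModPow_eq
      (x := binomCubeTerm T (p * i + j))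
      (y := binomCubeTerm T j * binomCubeTerm T i
        + p * (binomCubeTerm T j * (6 * (h₂ - h₁) + Q)) * (i * binomCubeTerm T i)) (by
      simp only [map_add, map_mul, map_sub, map_natCast, map_ofNat, map_binomCubeTerm, hz₁, hz₂]
      exact ZMod.binomCubeTerm_prime_mul_add hp2
        (by simpa using congrArg (PadicInt.toZModPow 2) hTQ) i h)
    rw [← hc₁, ← hc₂]
    push_cast [PadicInt.coe_binomCubeTerm] at hcongr
    exact hcongr
  · exact ModEqPSq.of_norm_le (norm_binomCubeTerm_le T.2 (hp.dvd_choose_two_mul_add i hj h))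
      (norm_binomCubeTerm_mul_add_le T.2 (norm_natCast_mul_harmonicSum_add_le_one hj Q.2) i
        (by simpa using hp.dvd_choose_two_mul_add 0 hj h))

open Padic in
theorem stmt7 (p : ℕ) [Fact p.Prime] (hp : 3 < p) (lam : ℤ_[p]) (hlam : ‖lam‖ = 1)
    (a b : ℕ → ℚ_[p])
    (hadef : ∀ n, a n = ∑ i ∈ range (n + 1),
        (Nat.choose (2 * i) i : ℚ_[p]) ^ 3 * ((lam : ℚ_[p]) / 64) ^ i)
    (hbdef : ∀ n, b n = ∑ i ∈ range (n + 1),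
        (Nat.choose (2 * i) i : ℚ_[p]) ^ 3 * ((lam : ℚ_[p]) / 64) ^ i *
          ((6 * ((harmonicSum (2 * i) : ℚ_[p]) - (harmonicSum i : ℚ_[p])))
            + (((lam : ℚ_[p]) / 64) ^ (p - 1) - 1) / p)) :
    ∀ k : ℕ, (p - 1) / 2 ≤ k → k < p → ∀ n : ℕ,
      ‖a (k + p * n)
          - (a k * a n + (p : ℚ_[p]) * b k *
              ∑ i ∈ range (n + 1),
                (i : ℚ_[p]) * (Nat.choose (2 * i) i : ℚ_[p]) ^ 3 * ((lam : ℚ_[p]) / 64) ^ i)‖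
        ≤ (p : ℝ) ^ (-2 : ℤ) := by
  intro k hk hkp n
  have hpp := (Fact.out : p.Prime)
  have hp2 : p ≠ 2 := by omega
  have hnorm : ‖(lam : ℚ_[p]) / 64‖ = 1 := by
    have h64 : ‖((2 ^ 6 : ℕ) : ℚ_[p])‖ = 1 := norm_natCast_eq_one_iff.mpr
      (Nat.Coprime.pow_right 6 ((Nat.coprime_primes hpp Nat.prime_two).mpr hp2))
    rw [norm_div, show (64 : ℚ_[p]) = ((2 ^ 6 : ℕ) : ℚ_[p]) by norm_num, h64, div_one,
      PadicInt.padic_norm_e_of_padicInt, hlam]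
  obtain ⟨T, Q, hTt, hTQ, hq⟩ := PadicInt.exists_fermatQuotient hnorm
  have hT : ‖(T : ℚ_[p])‖ ≤ 1 := by rw [hTt, hnorm]
  simp only [hadef, hbdef, hq]
  simp only [← hTt]
  have hblocks := sum_range_modEqPSq_sum_sum (f := binomCubeTerm (T : ℚ_[p])) hkp
    (fun i j hkj hjp => norm_binomCubeTerm_le hT (hpp.dvd_choose_two_mul_add i hjp (by omega))) n
  have hterms := ModEqPSq.sum (range (n + 1)) fun i _ => ModEqPSq.sum (range (k + 1)) fun j hj =>
    binomCubeTerm_prime_mul_add_modEqPSq hp2 hTQ i (j := j) (by rw [mem_range] at hj; omega)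
  refine (hblocks.trans hterms).trans (ModEqPSq.of_eq ?_)
  simp only [sum_mul, mul_sum, ← sum_add_distrib]
  refine sum_congr rfl fun i _ => sum_congr rfl fun j _ => ?_
  simp only [binomCubeTerm]
  ring
end

section
/- Let p be an odd prime and k an integer with 0 ≤ k ≤ (p−1)/2. Then 16^k · C((p−1)/2 + k, 2k) ≡ (−1)^k · C(2k,k) (mod p²). -/
/-!
Write `p = 2m + 1`. Pairing the factors `m - j` and `m + 1 + j` of the falling factorial
`(m + k)! / (m - k)! = (2k)! C(m + k, 2k)` gives
`16^k (2k)! C(m + k, 2k) = 4^k ∏_{j<k} (p² - (2j+1)²)`, while splitting `(2k)!` into odd and even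
factors gives `(2k)! C(2k, k) = 4^k ∏_{j<k} (2j+1)²`. Modulo `p²` the first product is
`(-1)^k ∏_{j<k} (2j+1)²`, so the congruence holds after multiplication by `(2k)!`, which is
prime to `p` because `2k < p`.
-/

open Nat Finset

lemma factorial_two_mul_eq_prod_odd (k : ℕ) :
    (2 * k)! = (∏ j ∈ range k, (2 * j + 1)) * (2 ^ k * k !) := by
  induction k with
  | zero => simp
  | succ n ih =>
    rw [prod_range_succ, show 2 * (n + 1) = 2 * n + 1 + 1 by ring, factorial_succ,
      factorial_succ, factorial_succ, ih]
    ring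

lemma factorial_two_mul_mul_choose (k : ℕ) :
    (2 * k)! * (2 * k).choose k = 4 ^ k * (∏ j ∈ range k, (2 * j + 1)) ^ 2 := by
  have hchoose : (2 * k).choose k * k ! * k ! = (2 * k)! := by
    simpa [show 2 * k - k = k by omega] using
      choose_mul_factorial_mul_factorial (by omega : k ≤ 2 * k)
  refine Nat.eq_of_mul_eq_mul_left (mul_pos k.factorial_pos k.factorial_pos) ?_
  calc k ! * k ! * ((2 * k)! * (2 * k).choose k)
      = (2 * k)! * ((2 * k).choose k * k ! * k !) := by ring
    _ = ((∏ j ∈ range k, (2 * j + 1)) * (2 ^ k * k !)) ^ 2 := by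
      rw [hchoose, ← factorial_two_mul_eq_prod_odd, sq]
    _ = k ! * k ! * (4 ^ k * (∏ j ∈ range k, (2 * j + 1)) ^ 2) := by
      rw [show (4 : ℕ) ^ k = 2 ^ k * 2 ^ k by rw [← mul_pow]; norm_num]
      ring

lemma four_pow_mul_descFactorial {m k : ℕ} (hk : k ≤ m) :
    4 ^ k * ((m + k).descFactorial (2 * k) : ℤ)
      = ∏ j ∈ range k, ((2 * m + 1 : ℤ) ^ 2 - (2 * j + 1) ^ 2) := by
  induction k with
  | zero => simp
  | succ n ih =>
    rw [prod_range_succ, ← ih (by omega), show 2 * (n + 1) = 2 * n + 1 + 1 by ring,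
      show m + (n + 1) = m + n + 1 by ring, succ_descFactorial_succ, descFactorial_succ,
      show m + n - 2 * n = m - n by omega]
    push_cast [Nat.cast_sub (by omega : n ≤ m)]
    ring

lemma Int.prod_sub_modEq_prod_neg {ι : Type*} (s : Finset ι) (n : ℤ) (f : ι → ℤ) :
    ∏ i ∈ s, (n - f i) ≡ ∏ i ∈ s, -f i [ZMOD n] :=
  Int.ModEq.prod fun i _ => by
    simpa using (Int.modulus_modEq_zero (n := n)).sub_right (f i)

lemma factorial_mul_choose_modEq {m k : ℕ} (hk : k ≤ m) :
    (2 * k)! * (16 ^ k * ((m + k).choose (2 * k) : ℤ))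
      ≡ (2 * k)! * ((-1) ^ k * ((2 * k).choose k : ℤ)) [ZMOD (2 * m + 1) ^ 2] := by
  have hcentral :
      ((2 * k)! * (2 * k).choose k : ℤ) = 4 ^ k * (∏ j ∈ range k, (2 * j + 1 : ℤ)) ^ 2 := by
    exact_mod_cast factorial_two_mul_mul_choose k
  calc (2 * k)! * (16 ^ k * ((m + k).choose (2 * k) : ℤ))
      = 4 ^ k * (4 ^ k * ((m + k).descFactorial (2 * k) : ℤ)) := by
        rw [descFactorial_eq_factorial_mul_choose, show (16 : ℤ) ^ k = 4 ^ k * 4 ^ k by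
          rw [← mul_pow]; norm_num]
        push_cast
        ring
    _ = 4 ^ k * ∏ j ∈ range k, ((2 * m + 1 : ℤ) ^ 2 - (2 * j + 1) ^ 2) := by
        rw [four_pow_mul_descFactorial hk]
    _ ≡ 4 ^ k * ∏ j ∈ range k, -(2 * j + 1 : ℤ) ^ 2 [ZMOD (2 * m + 1) ^ 2] :=
        (Int.prod_sub_modEq_prod_neg _ _ _).mul_left _
    _ = (2 * k)! * ((-1) ^ k * ((2 * k).choose k : ℤ)) := by
        rw [mul_left_comm, hcentral, prod_neg, prod_pow, card_range]
        ring

theorem stmt9 (p : ℕ) (hp : p.Prime) (hodd : Odd p) (k : ℕ) (hk : k ≤ (p - 1) / 2) :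
    ((p : ℤ) ^ 2) ∣
      (16 ^ k * (Nat.choose ((p - 1) / 2 + k) (2 * k) : ℤ)
        - (-1) ^ k * (Nat.choose (2 * k) k : ℤ)) := by
  obtain ⟨m, rfl⟩ := hodd
  have hm : (2 * m + 1 - 1) / 2 = m := by omega
  rw [hm] at hk ⊢
  have hcop : IsCoprime ((↑(2 * m + 1) : ℤ) ^ 2) ((2 * k)! : ℤ) :=
    (Nat.isCoprime_iff_coprime.mpr (hp.coprime_factorial_of_lt (by omega))).pow_left
  refine hcop.dvd_of_dvd_mul_left ?_
  rw [mul_sub]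
  exact_mod_cast (factorial_mul_choose_modEq hk).symm.dvd
end

section
/- Let p be an odd prime and λ ∈ ℤ_p. Then Σ_{k=0}^{(p−1)/2} C(2k,k)³ (λ/64)^k ≡ Σ_{k=0}^{(p−1)/2} C(2k,k)² · C((p−1)/2 + k, 2k) · (−λ/4)^k (mod p² ℤ_p). (The left side is the truncated hypergeometric sum Σ_{k=0}^{(p−1)/2} ((1/2)_k/k!)³ λ^k and the right side equals P_{(p−1)/2}(√(1−λ))² by Z.-H. Sun's identity.) -/
/-!
Write `r_j = (2j+1)/(2j+2)` and `m = (p-1)/2`. Then `C(2k,k)/4^k = ∏_{j<k} r_j`, and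
`(-1)^k C(2k,k) C(m+k,2k) = (-1)^k C(m+k,k) C(m,k) = ∏_{j<k} (r_j^2 - (p/(2j+2))^2)`, so the
`k`-th terms of the two sums are `u λ^k ∏ r_j^2` and `u λ^k ∏ (r_j^2 - (p/(2j+2))^2)` with
`u = ∏ r_j`. For `k ≤ m` every `2j+2` is a `p`-adic unit, so the two products agree modulo `p^2`
and the difference of the sums is bounded termwise by the ultrametric inequality.
-/

open Finset

theorem IsUltrametricDist.norm_prod_sub_prod_le {ι R : Type*} [NormedCommRing R] [NormOneClass R]
    [IsUltrametricDist R] {s : Finset ι} {f g : ι → R} {r : ℝ} (hr : 0 ≤ r)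
    (hf : ∀ i ∈ s, ‖f i‖ ≤ 1) (hg : ∀ i ∈ s, ‖g i‖ ≤ 1)
    (hfg : ∀ i ∈ s, ‖f i - g i‖ ≤ r) :
    ‖∏ i ∈ s, f i - ∏ i ∈ s, g i‖ ≤ r := by
  classical
  induction s using Finset.induction_on with
  | empty => simpa using hr
  | insert a s ha ih =>
    simp only [forall_mem_insert] at hf hg hfg
    have hgs : ‖∏ i ∈ s, g i‖ ≤ 1 :=
      (Finset.norm_prod_le _ _).trans (prod_le_one (fun _ _ ↦ norm_nonneg _) hg.2)
    rw [prod_insert ha, prod_insert ha,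
      show f a * ∏ i ∈ s, f i - g a * ∏ i ∈ s, g i
        = f a * (∏ i ∈ s, f i - ∏ i ∈ s, g i) + (f a - g a) * ∏ i ∈ s, g i by ring]
    refine (norm_add_le_max _ _).trans (max_le ?_ ?_)
    · exact (norm_mul_le _ _).trans <|
        (mul_le_mul hf.1 (ih hf.2 hg.2 hfg.2) (norm_nonneg _) zero_le_one).trans_eq (one_mul r)
    · exact (norm_mul_le _ _).trans <|
        (mul_le_mul hfg.1 hgs (norm_nonneg _) hr).trans_eq (mul_one r)

section CharZero

variable {K : Type*} [Field K] [CharZero K]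

theorem Nat.cast_centralBinom_eq (k : ℕ) :
    ((2 * k).choose k : K) = 4 ^ k * ∏ j ∈ range k, ((2 * j + 1) / (2 * j + 2) : K) := by
  induction k with
  | zero => simp
  | succ k ih =>
    have h := congrArg (Nat.cast : ℕ → K) (Nat.succ_mul_centralBinom_succ k)
    simp only [Nat.centralBinom_eq_two_mul_choose] at h
    push_cast at h
    rw [prod_range_succ, ← mul_assoc, pow_succ, mul_right_comm _ (4 : K), ← ih]
    have hk : (k : K) + 1 ≠ 0 := Nat.cast_add_one_ne_zero k
    field_simp
    linear_combination 2 * h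

theorem Nat.neg_one_pow_mul_cast_choose_add_mul_choose {m k : ℕ} (hk : k ≤ m) :
    (-1) ^ k * ((m + k).choose k * m.choose k : K)
      = ∏ j ∈ range k,
          (((2 * j + 1) / (2 * j + 2) : K) ^ 2 - ((2 * m + 1) / (2 * j + 2)) ^ 2) := by
  induction k with
  | zero => simp
  | succ k ih =>
    have h₁ := congrArg (Nat.cast : ℕ → K) (Nat.choose_succ_right_eq m k)
    have h₂ := congrArg (Nat.cast : ℕ → K) (Nat.add_one_mul_choose_eq (m + k) k)
    push_cast [Nat.cast_sub (by omega : k ≤ m)] at h₁ h₂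
    rw [prod_range_succ, ← ih (by omega), ← add_assoc]
    have hk : (k : K) + 1 ≠ 0 := Nat.cast_add_one_ne_zero k
    have hk2 : 2 * (k : K) + 2 ≠ 0 := by norm_cast
    field_simp
    linear_combination (-4 * (-1) ^ k * ((m + k + 1).choose (k + 1) : K) * (k + 1)) * h₁
      + (4 * (-1) ^ k * (m.choose k : K) * (m - k)) * h₂

theorem choose_cube_term_sub_choose_sq_term_eq {m k : ℕ} (hk : k ≤ m) (x : K) :
    ((2 * k).choose k : K) ^ 3 * (x / 64) ^ k
        - ((2 * k).choose k : K) ^ 2 * ((m + k).choose (2 * k) : K) * (-x / 4) ^ k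
      = (∏ j ∈ range k, ((2 * j + 1) / (2 * j + 2) : K)) * x ^ k *
          (∏ j ∈ range k, ((2 * j + 1) / (2 * j + 2) : K) ^ 2
            - ∏ j ∈ range k,
                (((2 * j + 1) / (2 * j + 2) : K) ^ 2 - ((2 * m + 1) / (2 * j + 2)) ^ 2)) := by
  have hmul : ((2 * k).choose k : K) * ((m + k).choose (2 * k) : K)
      = (m + k).choose k * m.choose k := by
    have h := Nat.choose_mul (n := m + k) (show k ≤ 2 * k by omega)
    rw [show m + k - k = m by omega, show 2 * k - k = k by omega] at h
    exact_mod_cast (mul_comm _ _).trans h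
  rw [← Nat.neg_one_pow_mul_cast_choose_add_mul_choose hk, prod_pow,
    show ((2 * k).choose k : K) ^ 2 * ((m + k).choose (2 * k) : K) * (-x / 4) ^ k
      = (2 * k).choose k * ((2 * k).choose k * (m + k).choose (2 * k)) * (-x / 4) ^ k by ring,
    hmul, Nat.cast_centralBinom_eq, div_pow, neg_div, neg_pow, div_pow,
    show (64 : K) = 4 ^ 3 by norm_num, ← pow_mul, mul_comm 3, pow_mul]
  field_simp

end CharZero

namespace Padic

variable {p : ℕ} [hp : Fact p.Prime]

theorem norm_choose_cube_term_sub_choose_sq_term_le {m k : ℕ} (hm : 2 * m + 1 = p) (hk : k ≤ m)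
    {x : ℚ_[p]} (hx : ‖x‖ ≤ 1) :
    ‖((2 * k).choose k : ℚ_[p]) ^ 3 * (x / 64) ^ k
        - ((2 * k).choose k : ℚ_[p]) ^ 2 * ((m + k).choose (2 * k) : ℚ_[p]) * (-x / 4) ^ k‖
      ≤ (p : ℝ) ^ (-2 : ℤ) := by
  have hden : ∀ j ∈ range k, ‖(2 * j + 2 : ℚ_[p])‖ = 1 := fun j hj ↦ by
    have h := Nat.coprime_of_lt_prime (n := 2 * j + 2) (by omega)
      (by have := mem_range.mp hj; omega) hp.out
    exact_mod_cast norm_natCast_eq_one_iff.mpr h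
  have hratio : ∀ j ∈ range k, ‖((2 * j + 1) / (2 * j + 2) : ℚ_[p])‖ ≤ 1 :=
    fun j hj ↦ by
      rw [norm_div, hden j hj, div_one]
      exact_mod_cast IsUltrametricDist.norm_natCast_le_one ℚ_[p] (2 * j + 1)
  have hratio_sq : ∀ j ∈ range k, ‖((2 * j + 1) / (2 * j + 2) : ℚ_[p]) ^ 2‖ ≤ 1 :=
    fun j hj ↦ by rw [norm_pow]; exact pow_le_one₀ (norm_nonneg _) (hratio j hj)
  have hsmall : ∀ j ∈ range k,
      ‖((2 * m + 1) / (2 * j + 2) : ℚ_[p]) ^ 2‖ = (p : ℝ) ^ (-2 : ℤ) := fun j hj ↦ by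
    rw [norm_pow, norm_div, hden j hj, div_one,
      show (2 * m + 1 : ℚ_[p]) = p by exact_mod_cast hm, norm_p, inv_pow, zpow_neg, zpow_ofNat]
  have hp2 : (p : ℝ) ^ (-2 : ℤ) ≤ 1 :=
    zpow_le_one_of_nonpos₀ (by exact_mod_cast hp.out.one_le) (by norm_num)
  have hcofactor : ‖(∏ j ∈ range k, ((2 * j + 1) / (2 * j + 2) : ℚ_[p])) * x ^ k‖ ≤ 1 := by
    rw [norm_mul, norm_prod, norm_pow]
    exact mul_le_one₀ (prod_le_one (fun _ _ ↦ norm_nonneg _) hratio) (by positivity)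
      (pow_le_one₀ (norm_nonneg _) hx)
  rw [choose_cube_term_sub_choose_sq_term_eq hk, norm_mul]
  refine (mul_le_of_le_one_left (norm_nonneg _) hcofactor).trans <|
    IsUltrametricDist.norm_prod_sub_prod_le (by positivity) hratio_sq (fun j hj ↦ ?_)
      (fun j hj ↦ by rw [sub_sub_cancel, hsmall j hj])
  rw [sub_eq_add_neg]
  exact (IsUltrametricDist.norm_add_le_max _ _).trans
    (max_le (hratio_sq j hj) ((norm_neg _).trans_le ((hsmall j hj).trans_le hp2)))

end Padic

theorem stmt10 (p : ℕ) [Fact p.Prime] (hp : Odd p) (lam : ℤ_[p]) :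
    ‖(∑ k ∈ range ((p - 1) / 2 + 1),
          (Nat.choose (2 * k) k : ℚ_[p]) ^ 3 * ((lam : ℚ_[p]) / 64) ^ k)
        - ∑ k ∈ range ((p - 1) / 2 + 1),
            (Nat.choose (2 * k) k : ℚ_[p]) ^ 2 *
              (Nat.choose ((p - 1) / 2 + k) (2 * k) : ℚ_[p]) * (-(lam : ℚ_[p]) / 4) ^ k‖
      ≤ (p : ℝ) ^ (-2 : ℤ) := by
  have hm : 2 * ((p - 1) / 2) + 1 = p := by
    obtain ⟨s, rfl⟩ := hp
    omega
  have hlam : ‖(lam : ℚ_[p])‖ ≤ 1 := by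
    rw [PadicInt.padic_norm_e_of_padicInt]; exact lam.norm_le_one
  rw [← sum_sub_distrib]
  refine IsUltrametricDist.norm_sum_le_of_forall_le_of_nonneg (by positivity) fun k hk ↦ ?_
  exact Padic.norm_choose_cube_term_sub_choose_sq_term_le hm
    (Nat.lt_succ_iff.mp (mem_range.mp hk)) hlam
end

section
/- Let p be an odd prime and λ ∈ ℤ_p. Then Σ_{k=0}^{(p−1)/2} C(2k,k)² (λ/16)^k ≡ Σ_{k=0}^{(p−1)/2} C((p−1)/2 + k, k) · C((p−1)/2, k) · (−λ)^k (mod p² ℤ_p). -/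
/-!
Write p = 2m + 1; the congruence holds term by term. After multiplying the k-th terms by
4^k k!², they become 16^k ∏_{i<k} (2i+1)² and 16^k ∏_{i<k} ((2i+1)² - p²) (times (λ/16)^k),
because k! C(2k,k) = 2^k ∏_{i<k} (2i+1) and 4 (m+1+i)(m-i) = p² - (2i+1)². The two products
agree modulo p², and 4^k k!² is prime to p since k < p.
-/

open Finset Nat

theorem centralBinom_mul_factorial (k : ℕ) :
    k.centralBinom * k ! = 2 ^ k * ∏ i ∈ range k, (2 * i + 1) := by
  induction k with
  | zero => simp
  | succ k ih =>
    calc (k + 1).centralBinom * (k + 1)! = (k + 1) * (k + 1).centralBinom * k ! := by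
          rw [factorial_succ]; ring
      _ = 2 * (2 * k + 1) * (k.centralBinom * k !) := by rw [succ_mul_centralBinom_succ]; ring
      _ = 2 ^ (k + 1) * ∏ i ∈ range (k + 1), (2 * i + 1) := by
          rw [ih, prod_range_succ]; ring

theorem four_pow_mul_factorial_sq_mul_choose_mul_choose {m k : ℕ} (hk : k ≤ m) :
    (4 ^ k * (k ! ^ 2 * ((m + k).choose k * m.choose k)) : ℤ) =
      ∏ i ∈ range k, ((2 * m + 1) ^ 2 - (2 * i + 1) ^ 2 : ℤ) := by
  have hasc : (k ! * (m + k).choose k : ℤ) = ∏ i ∈ range k, ((m : ℤ) + 1 + i) := by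
    exact_mod_cast (ascFactorial_eq_factorial_mul_choose m k).symm.trans
      (ascFactorial_eq_prod_range (m + 1) k)
  have hdesc : (k ! * m.choose k : ℤ) = ∏ i ∈ range k, ((m : ℤ) - i) := by
    rw [← Nat.cast_mul, ← descFactorial_eq_factorial_mul_choose, descFactorial_eq_prod_range,
      Nat.cast_prod]
    exact prod_congr rfl fun i hi => Nat.cast_sub (by simp at hi; omega)
  calc (4 ^ k * (k ! ^ 2 * ((m + k).choose k * m.choose k)) : ℤ)
      = (∏ _i ∈ range k, (4 : ℤ)) * (k ! * (m + k).choose k) * (k ! * m.choose k) := by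
        rw [prod_const, card_range]; ring
    _ = ∏ i ∈ range k, ((2 * m + 1) ^ 2 - (2 * i + 1) ^ 2 : ℤ) := by
        rw [hasc, hdesc, ← prod_mul_distrib, ← prod_mul_distrib]
        exact prod_congr rfl fun i _ => by ring

theorem dvd_prod_sub_prod_sub_const {ι : Type*} (s : Finset ι) (f : ι → ℤ) (c : ℤ) :
    c ∣ ∏ i ∈ s, f i - ∏ i ∈ s, (f i - c) :=
  (Int.ModEq.prod fun i _ => (Int.modEq_iff_dvd.mpr (by simp))).dvd

theorem sq_dvd_centralBinom_sq_sub {p m k : ℕ} (hp : p.Prime) (hpm : p = 2 * m + 1) (hk : k ≤ m) :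
    (p : ℤ) ^ 2 ∣ (k.centralBinom : ℤ) ^ 2 - (-16) ^ k * ((m + k).choose k * m.choose k) := by
  have hcentral : (4 ^ k * k ! ^ 2 * k.centralBinom ^ 2 : ℤ) =
      16 ^ k * ∏ i ∈ range k, ((2 * i + 1) ^ 2 : ℤ) := by
    have h := congrArg (fun n : ℕ => (n : ℤ) ^ 2) (centralBinom_mul_factorial k)
    push_cast at h
    have h16 : (16 : ℤ) ^ k = 4 ^ k * (2 ^ k) ^ 2 := by
      rw [← pow_mul, pow_mul', ← mul_pow]; norm_num
    calc _ = 4 ^ k * ((k.centralBinom : ℤ) * k !) ^ 2 := by ring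
      _ = _ := by rw [h, h16, prod_pow]; ring
  have hchoose : (4 ^ k * k ! ^ 2 * ((-16) ^ k * ((m + k).choose k * m.choose k)) : ℤ) =
      16 ^ k * ∏ i ∈ range k, ((2 * i + 1) ^ 2 - (p : ℤ) ^ 2) := by
    rw [show (-16 : ℤ) = 16 * (-1) by norm_num, mul_pow]
    calc _ = 16 ^ k * ((-1 : ℤ) ^ k * (4 ^ k * (k ! ^ 2 * ((m + k).choose k * m.choose k)))) := by
          ring
      _ = _ := by
        rw [four_pow_mul_factorial_sq_mul_choose_mul_choose hk,
          show (-1 : ℤ) ^ k = (-1) ^ #(range k) by rw [card_range], ← prod_neg, hpm]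
        push_cast
        exact congrArg _ (prod_congr rfl fun i _ => by ring)
  have hcop : IsCoprime ((p : ℤ) ^ 2) (4 ^ k * k ! ^ 2) := by
    have hodd : Odd p := hpm ▸ odd_two_mul_add_one m
    have h4 : Nat.Coprime p 4 := Nat.Coprime.pow_right 2 (coprime_two_right.mpr hodd)
    have hfact : Nat.Coprime p k ! := (hp.coprime_iff_not_dvd).mpr fun h => by
      rw [hp.dvd_factorial] at h; omega
    exact_mod_cast Nat.isCoprime_iff_coprime.mpr
      (Nat.Coprime.pow_left 2 ((h4.pow_right k).mul_right (hfact.pow_right 2)))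
  refine hcop.dvd_of_dvd_mul_left ?_
  rw [mul_sub, hcentral, hchoose, ← mul_sub]
  exact Dvd.dvd.mul_left (dvd_prod_sub_prod_sub_const _ _ _) _

theorem stmt11 (p : ℕ) [Fact p.Prime] (hp : Odd p) (lam : ℤ_[p]) :
    ‖(∑ k ∈ range ((p - 1) / 2 + 1),
          (Nat.choose (2 * k) k : ℚ_[p]) ^ 2 * ((lam : ℚ_[p]) / 16) ^ k)
        - ∑ k ∈ range ((p - 1) / 2 + 1),
            (Nat.choose ((p - 1) / 2 + k) k : ℚ_[p]) *
              (Nat.choose ((p - 1) / 2) k : ℚ_[p]) * (-(lam : ℚ_[p])) ^ k‖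
      ≤ (p : ℝ) ^ (-2 : ℤ) := by
  obtain ⟨m, hpm⟩ := hp
  rw [show (p - 1) / 2 = m by omega, ← sum_sub_distrib]
  refine IsUltrametricDist.norm_sum_le_of_forall_le_of_nonneg (by positivity) fun k hk => ?_
  obtain ⟨w, hw⟩ := sq_dvd_centralBinom_sq_sub Fact.out hpm (Nat.lt_succ_iff.mp (mem_range.mp hk))
  have hterm : (Nat.choose (2 * k) k : ℚ_[p]) ^ 2 * ((lam : ℚ_[p]) / 16) ^ k -
      ((m + k).choose k : ℚ_[p]) * (m.choose k : ℚ_[p]) * (-(lam : ℚ_[p])) ^ k =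
      ((lam : ℚ_[p]) / 16) ^ k * (((p : ℤ) ^ 2 * w : ℤ) : ℚ_[p]) := by
    rw [← hw, ← centralBinom_eq_two_mul_choose]
    push_cast
    rw [show -(lam : ℚ_[p]) = -16 * (lam / 16) by ring, mul_pow]
    ring
  have h16 : ‖(16 : ℚ_[p])‖ = 1 := by
    exact_mod_cast Padic.norm_natCast_eq_one_iff.mpr
      (Nat.Coprime.pow_right 4 (coprime_two_right.mpr ⟨m, hpm⟩))
  have hlam : ‖(lam : ℚ_[p]) / 16‖ ≤ 1 := by
    rw [norm_div, h16, div_one, PadicInt.padic_norm_e_of_padicInt]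
    exact PadicInt.norm_le_one lam
  rw [hterm, norm_mul, norm_pow]
  exact (mul_le_of_le_one_left (norm_nonneg _) (pow_le_one₀ (norm_nonneg _) hlam)).trans
    ((Padic.norm_int_le_pow_iff_dvd _ 2).mpr (dvd_mul_right _ _))
end

section
/- For every natural number n, the polynomial identity Σ_{k=0}^{n} C(2k,k)² · C(n+k, 2k) · ((x²−1)/4)^k = P_n(x)² holds in ℚ[x], where P_n(x) = (1/(2^n n!)) · (d/dx)^n (x²−1)^n is the n-th Legendre polynomial. -/
/-!
Both sides are annihilated by the symmetric square `legendreSqOp N` of the Legendre operator,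
`N = n (n + 1)`: the right side because `P_n` solves Legendre's equation, the left side because in
the variable `t = x² - 1` that operator acts on `t ^ k` by a two-term recurrence which the
coefficients `C(2k, k)² C(n + k, 2k) / 4 ^ k` satisfy. Both sides take the value `1` at `x = 1`.
Since the indicial polynomial of the operator at the regular singular point `x = 1` is `4 m³`, a
polynomial solution vanishing at `1` vanishes there to every order, hence is zero.
-/

open Finset Polynomial

/-- The `n`-th Legendre polynomial over `ℚ`, via the Rodrigues formula
`P_n(x) = (1/(2^n n!)) (d/dx)^n (x²−1)^n`. -/
noncomputable def legendreP (n : ℕ) : Polynomial ℚ :=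
  Polynomial.C (1 / (2 ^ n * n.factorial : ℚ)) *
    (Polynomial.derivative^[n] ((Polynomial.X ^ 2 - 1) ^ n))

namespace Polynomial

section CommRing

variable {R : Type*} [CommRing R]

theorem iterate_derivative_X_mul (m : ℕ) (q : R[X]) :
    derivative^[m + 1] (X * q)
      = X * derivative^[m + 1] q + (m + 1 : R[X]) * derivative^[m] q := by
  induction m with
  | zero => simp [derivative_mul, add_comm]
  | succ m ih =>
    rw [Function.iterate_succ_apply', ih, Function.iterate_succ_apply' _ (m + 1),
      Function.iterate_succ_apply' _ m]
    simp only [derivative_add, derivative_mul, derivative_X, derivative_natCast, derivative_one]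
    push_cast
    ring

theorem iterate_derivative_X_sq_sub_one_mul (m : ℕ) (q : R[X]) :
    derivative^[m + 2] ((X ^ 2 - 1) * q) = (X ^ 2 - 1) * derivative^[m + 2] q
      + 2 * (m + 2 : R[X]) * X * derivative^[m + 1] q
      + ((m + 2) * (m + 1) : R[X]) * derivative^[m] q := by
  have h := iterate_derivative_X_mul (m + 1) (X * q)
  rw [iterate_derivative_X_mul (m + 1) q, iterate_derivative_X_mul m q] at h
  rw [sub_mul, one_mul, sq, mul_assoc, iterate_derivative_sub, h]
  push_cast
  ring

theorem X_sq_sub_one_mul_derivative_pow (n : ℕ) :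
    (X ^ 2 - 1 : R[X]) * derivative ((X ^ 2 - 1) ^ n)
      = 2 * (n : R[X]) * X * (X ^ 2 - 1) ^ n := by
  cases n with
  | zero => simp
  | succ n =>
    rw [derivative_pow]
    simp only [derivative_sub, derivative_X_pow, derivative_one, map_natCast]
    push_cast
    ring

theorem legendre_ode_iterate_derivative (n : ℕ) :
    (X ^ 2 - 1 : R[X]) * derivative^[n + 2] ((X ^ 2 - 1) ^ n)
      + 2 * X * derivative^[n + 1] ((X ^ 2 - 1) ^ n)
      = (n * (n + 1) : R[X]) * derivative^[n] ((X ^ 2 - 1) ^ n) := by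
  cases n with
  | zero => simp
  | succ m =>
    set w : R[X] := (X ^ 2 - 1) ^ (m + 1)
    have h : derivative^[m + 2] ((X ^ 2 - 1) * derivative w)
        = derivative^[m + 2] (((2 * (m + 1) : ℕ) : R[X]) * (X * w)) := by
      rw [X_sq_sub_one_mul_derivative_pow]
      congr 1
      push_cast
      ring
    rw [iterate_derivative_X_sq_sub_one_mul, iterate_derivative_natCast_mul,
      iterate_derivative_X_mul (m + 1)] at h
    simp only [← Function.iterate_succ_apply] at h
    push_cast at h ⊢
    linear_combination h

theorem eval_one_iterate_derivative_X_sq_sub_one_pow (n : ℕ) :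
    (derivative^[n] ((X ^ 2 - 1 : R[X]) ^ n)).eval 1 = 2 ^ n * n.factorial := by
  have hsplit : (X ^ 2 - 1 : R[X]) ^ n = (X - C 1) ^ n * (X + 1) ^ n := by
    rw [← mul_pow, C_1]; ring
  rw [hsplit, iterate_derivative_mul, eval_finsetSum, Finset.sum_eq_single 0]
  · rw [Nat.sub_zero, iterate_derivative_X_sub_pow_self]
    simp [mul_comm, one_add_one_eq_two]
  · intro k hk hk0
    rw [iterate_derivative_X_sub_pow, Nat.sub_sub_self (by simpa [Nat.lt_succ_iff] using hk)]
    simp [zero_pow hk0]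
  · simp

/-- The symmetric square of the Legendre operator `(X² - 1) D² + 2 X D - N`. -/
noncomputable def legendreSqOp (N : R) (z : R[X]) : R[X] :=
  (X ^ 2 - 1) ^ 2 * derivative (derivative (derivative z))
    + 6 * X * (X ^ 2 - 1) * derivative (derivative z)
    + ((6 - 4 * C N) * (X ^ 2 - 1) + 4) * derivative z - 4 * C N * X * z

theorem legendreSqOp_sub (N : R) (p q : R[X]) :
    legendreSqOp N (p - q) = legendreSqOp N p - legendreSqOp N q := by
  simp only [legendreSqOp, derivative_sub]
  ring

theorem legendreSqOp_sq_eq_zero {N : R} {y : R[X]}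
    (hy : (X ^ 2 - 1) * derivative (derivative y) + 2 * X * derivative y = C N * y) :
    legendreSqOp N (y ^ 2) = 0 := by
  have hy' := congrArg derivative hy
  simp only [derivative_add, derivative_mul, derivative_sub, derivative_X_sq, derivative_X,
    derivative_one, derivative_C, derivative_ofNat, map_ofNat] at hy'
  simp only [legendreSqOp, sq y, derivative_mul, derivative_add]
  linear_combination (6 * (X ^ 2 - 1) * derivative y + 4 * X * y) * hy
    + 2 * y * (X ^ 2 - 1) * hy'

noncomputable def eulerOp (p : R[X]) : R[X] := X * derivative p

theorem coeff_eulerOp (p : R[X]) (i : ℕ) : (eulerOp p).coeff i = i * p.coeff i := by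
  cases i with
  | zero => simp [eulerOp]
  | succ i => simp [eulerOp, coeff_derivative, mul_comm]

/-- `legendreSqOp` transported to the variable `t = X² - 1` (see `legendreSqOp_comp`). With
`θ = eulerOp` it is `4 (2θ + 1)(θ(θ + 1) - N) + 8 D θ²`, so it acts on `t ^ k` by a two-term
recurrence. -/
noncomputable def legendreSqOpT (N : R) (q : R[X]) : R[X] :=
  4 * (2 * eulerOp (eulerOp (eulerOp q)) + 3 * eulerOp (eulerOp q)
      + C (1 - 2 * N) * eulerOp q - C N * q)
    + 8 * derivative (eulerOp (eulerOp q))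

theorem coeff_legendreSqOpT (N : R) (q : R[X]) (i : ℕ) :
    (legendreSqOpT N q).coeff i
      = 4 * (2 * i + 1) * (i * (i + 1) - N) * q.coeff i + 8 * (i + 1) ^ 3 * q.coeff (i + 1) := by
  simp only [legendreSqOpT, coeff_add, coeff_sub, coeff_ofNat_mul, coeff_C_mul, coeff_eulerOp,
    coeff_derivative]
  push_cast
  ring

theorem legendreSqOp_comp (N : R) (q : R[X]) :
    legendreSqOp N (q.comp (X ^ 2 - 1)) = X * (legendreSqOpT N q).comp (X ^ 2 - 1) := by
  have hc : ∀ p : R[X],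
      derivative (p.comp (X ^ 2 - 1)) = 2 * X * (derivative p).comp (X ^ 2 - 1) := by
    intro p
    rw [derivative_comp, derivative_sub, derivative_X_sq, derivative_one, sub_zero, map_ofNat]
  simp only [legendreSqOp, legendreSqOpT, eulerOp, hc, derivative_mul, derivative_add,
    derivative_X, derivative_one, derivative_zero, derivative_ofNat, add_comp,
    sub_comp, mul_comp, X_comp, C_comp, one_comp, zero_comp, ofNat_comp, map_sub, map_mul, map_one,
    map_ofNat]
  ring

theorem mul_derivative_pow_mul_of_derivative_eq_one {T : R[X]} (hT : derivative T = 1) (k : ℕ)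
    (h : R[X]) : T * derivative (T ^ k * h) = T ^ k * ((k : R[X]) * h + T * derivative h) := by
  cases k with
  | zero => simp
  | succ k =>
    rw [derivative_mul, derivative_pow, hT, map_natCast]
    push_cast
    ring

/-- `X = 1` is a regular singular point of `legendreSqOp` with indicial polynomial `4 m³`. -/
theorem legendreSqOp_X_sub_C_one_pow_mul (N : R) (k : ℕ) (g : R[X]) :
    ∃ F, legendreSqOp N ((X - C 1) ^ (k + 1) * g) = (X - C 1) ^ k * F
      ∧ F.eval 1 = 4 * (k + 1) ^ 3 * g.eval 1 := by
  obtain ⟨T, hT⟩ : ∃ T : R[X], T = X - C 1 := ⟨_, rfl⟩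
  have hT' : derivative T = 1 := by rw [hT, derivative_X_sub_C]
  rw [← hT]
  set z := T ^ (k + 1) * g
  obtain ⟨h₁, hh₁⟩ : ∃ h₁, h₁ = (k + 1 : R[X]) * g + T * derivative g := ⟨_, rfl⟩
  obtain ⟨h₂, hh₂⟩ : ∃ h₂, h₂ = (k : R[X]) * h₁ + T * derivative h₁ := ⟨_, rfl⟩
  obtain ⟨h₃, hh₃⟩ : ∃ h₃, h₃ = ((k : R[X]) - 1) * h₂ + T * derivative h₂ := ⟨_, rfl⟩
  have e₁ : derivative z = T ^ k * h₁ := by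
    rw [derivative_mul, derivative_pow, hT', map_natCast, hh₁]
    push_cast
    ring
  have e₂ : T * derivative (derivative z) = T ^ k * h₂ := by
    rw [e₁, mul_derivative_pow_mul_of_derivative_eq_one hT', hh₂]
  have e₃ : T ^ 2 * derivative (derivative (derivative z)) = T ^ k * h₃ := by
    have h := congrArg (T * derivative ·) e₂
    rw [mul_derivative_pow_mul_of_derivative_eq_one hT', derivative_mul, hT', one_mul] at h
    linear_combination h - e₂ - T ^ k * hh₃
  refine ⟨(X + 1) ^ 2 * h₃ + 6 * X * (X + 1) * h₂ + ((6 - 4 * C N) * (X ^ 2 - 1) + 4) * h₁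
    - 4 * C N * X * T * g, ?_, ?_⟩
  · have hX : (X ^ 2 - 1 : R[X]) = T * (X + 1) := by rw [hT, C_1]; ring
    simp only [legendreSqOp, hX]
    linear_combination (X + 1) ^ 2 * e₃ + 6 * X * (X + 1) * e₂
      + ((6 - 4 * C N) * (T * (X + 1)) + 4) * e₁
  · have hT₁ : T.eval 1 = 0 := by simp [hT]
    simp [hh₁, hh₂, hh₃, hT₁]
    ring

end CommRing

section Domain

variable {R : Type*} [CommRing R] [IsDomain R] [CharZero R]

theorem eq_zero_of_legendreSqOp_eq_zero {N : R} {z : R[X]} (hz : legendreSqOp N z = 0)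
    (h1 : z.eval 1 = 0) : z = 0 := by
  have hdvd : ∀ k : ℕ, (X - C 1) ^ (k + 1) ∣ z := by
    intro k
    induction k with
    | zero => simpa using dvd_iff_isRoot.mpr h1
    | succ k ih =>
      obtain ⟨g, rfl⟩ := ih
      obtain ⟨F, hF, hF1⟩ := legendreSqOp_X_sub_C_one_pow_mul N k g
      rw [hF, mul_eq_zero, or_iff_right (pow_ne_zero _ (X_sub_C_ne_zero 1))] at hz
      have hk : (4 * (k + 1) ^ 3 : R) ≠ 0 := by
        exact_mod_cast (by positivity : 4 * (k + 1) ^ 3 ≠ 0)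
      rw [hz, eval_zero, eq_comm, mul_eq_zero, or_iff_right hk] at hF1
      obtain ⟨g', rfl⟩ := dvd_iff_isRoot.mpr hF1
      exact ⟨g', by ring⟩
  by_contra hne
  exact pow_rootMultiplicity_not_dvd hne 1 (hdvd _)

end Domain

end Polynomial

theorem legendreP_ode (n : ℕ) :
    (X ^ 2 - 1) * derivative (derivative (legendreP n)) + 2 * X * derivative (legendreP n)
      = C ((n : ℚ) * (n + 1)) * legendreP n := by
  have h := legendre_ode_iterate_derivative (R := ℚ) n
  simp only [legendreP, derivative_C_mul, ← Function.iterate_succ_apply' derivative, map_mul,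
    map_add, map_natCast, map_one]
  linear_combination C (1 / (2 ^ n * n.factorial : ℚ)) * h

theorem legendreP_eval_one (n : ℕ) : (legendreP n).eval 1 = 1 := by
  rw [legendreP, eval_mul, eval_C, eval_one_iterate_derivative_X_sq_sub_one_pow]
  have : (2 ^ n * n.factorial : ℚ) ≠ 0 := by positivity
  field_simp

def sunCoeff (n k : ℕ) : ℚ := ((2 * k).choose k : ℚ) ^ 2 * ((n + k).choose (2 * k) : ℚ)

theorem sunCoeff_eq_zero_of_lt {n k : ℕ} (h : n < k) : sunCoeff n k = 0 := by
  simp [sunCoeff, Nat.choose_eq_zero_of_lt (by omega : n + k < 2 * k)]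

theorem sunCoeff_succ (n k : ℕ) :
    ((k : ℚ) + 1) ^ 3 * sunCoeff n (k + 1)
      = 2 * (2 * k + 1) * (n - k) * (n + k + 1) * sunCoeff n k := by
  rcases lt_or_ge n k with h | h
  · simp [sunCoeff_eq_zero_of_lt h, sunCoeff_eq_zero_of_lt (h.trans k.lt_succ_self)]
  have hc : ((k : ℚ) + 1) * (2 * (k + 1)).choose (k + 1)
      = 2 * (2 * k + 1) * (2 * k).choose k := by
    exact_mod_cast Nat.succ_mul_centralBinom_succ k
  have e₁ : ((n + k + 1 : ℕ) : ℚ) * (n + k).choose (2 * k + 1)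
      = (n + (k + 1)).choose (2 * (k + 1)) * ((2 * k + 1 + 1 : ℕ) : ℚ) := by
    rw [show n + (k + 1) = n + k + 1 by ring, show 2 * (k + 1) = 2 * k + 1 + 1 by ring]
    exact_mod_cast Nat.add_one_mul_choose_eq (n + k) (2 * k + 1)
  have e₂ : ((n + k).choose (2 * k + 1) : ℚ) * (2 * k + 1)
      = (n + k).choose (2 * k) * ((n : ℚ) - k) := by
    rw [← Nat.cast_sub h, show n - k = n + k - 2 * k by omega]
    exact_mod_cast Nat.choose_succ_right_eq (n + k) (2 * k)
  simp only [sunCoeff]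
  push_cast at hc e₁ ⊢
  linear_combination (k + 1) * ((n + (k + 1)).choose (2 * (k + 1)) : ℚ)
      * ((k + 1) * (2 * (k + 1)).choose (k + 1) + 2 * (2 * k + 1) * (2 * k).choose k) * hc
    + 2 * (2 * k + 1) * ((2 * k).choose k : ℚ) ^ 2 * (-(2 * k + 1) * e₁ + (n + k + 1) * e₂)

noncomputable def sunPoly (n : ℕ) : ℚ[X] :=
  ∑ k ∈ range (n + 1), C (sunCoeff n k / 4 ^ k) * X ^ k

theorem coeff_sunPoly (n i : ℕ) : (sunPoly n).coeff i = sunCoeff n i / 4 ^ i := by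
  simp only [sunPoly, finsetSum_coeff, coeff_C_mul_X_pow, Finset.sum_ite_eq, mem_range]
  split_ifs with h
  · rfl
  · rw [sunCoeff_eq_zero_of_lt (by omega), zero_div]

theorem legendreSqOpT_sunPoly (n : ℕ) : legendreSqOpT ((n : ℚ) * (n + 1)) (sunPoly n) = 0 := by
  ext i
  rw [coeff_legendreSqOpT, coeff_sunPoly, coeff_sunPoly, coeff_zero, pow_succ]
  linear_combination 2 / (4 : ℚ) ^ i * sunCoeff_succ n i

theorem eval_one_sunPoly_comp (n : ℕ) : ((sunPoly n).comp (X ^ 2 - 1)).eval 1 = 1 := by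
  simp [eval_comp, ← coeff_zero_eq_eval_zero, coeff_sunPoly, sunCoeff]

theorem sum_eq_sunPoly_comp (n : ℕ) :
    ∑ k ∈ range (n + 1),
        C ((Nat.choose (2 * k) k : ℚ) ^ 2 * (Nat.choose (n + k) (2 * k) : ℚ)) *
          (C ((1 : ℚ) / 4) * (X ^ 2 - 1)) ^ k
      = (sunPoly n).comp (X ^ 2 - 1) := by
  simp only [sunPoly, Polynomial.sum_comp, mul_comp, C_comp, X_pow_comp]
  refine Finset.sum_congr rfl fun k _ => ?_
  rw [mul_pow, ← C_pow, ← mul_assoc, ← C_mul, sunCoeff, one_div, inv_pow, div_eq_mul_inv]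

theorem stmt16 (n : ℕ) :
    ∑ k ∈ range (n + 1),
        Polynomial.C ((Nat.choose (2 * k) k : ℚ) ^ 2 * (Nat.choose (n + k) (2 * k) : ℚ)) *
          (Polynomial.C ((1 : ℚ) / 4) * (Polynomial.X ^ 2 - 1)) ^ k
      = (legendreP n) ^ 2 := by
  rw [sum_eq_sunPoly_comp, ← sub_eq_zero]
  apply eq_zero_of_legendreSqOp_eq_zero (N := (n : ℚ) * (n + 1))
  · rw [legendreSqOp_sub, legendreSqOp_comp, legendreSqOpT_sunPoly, zero_comp, mul_zero,
      legendreSqOp_sq_eq_zero (legendreP_ode n), sub_zero]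
  · rw [eval_sub, eval_one_sunPoly_comp, eval_pow, legendreP_eval_one, one_pow, sub_self]
end
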